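/- Let d ≥ 1, let ξ be any nonnegative weight on finite nonempty subsets of ℤ^d, let α > 0, and let N ≥ 1. Suppose that for every finite collection S′ of finite nonempty subsets of ℤ^d with |S′| = N and every x in the union of the members of S′ one has Σ_{Λ ∈ S′, Λ ∋ x} Θ(S′|Λ) ≤ α. Then for every finite collection S with |S| = N + 1 and every x in the union of the members of S, Σ_{Λ ∈ S, Λ ∋ x} Θ(S|Λ) ≤ Σ_{Λ ∈ S, Λ ∋ x} ξ(Λ) e^{α|Λ|}. -/

import Mathlib

open scoped BigOperators Classical

abbrev Site (d : ℕ) := Fin d → ℤ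

/-- A finite collection `T` of finite subsets of `ℤ^d` is connected if the graph on `T`
with an edge between two members whenever they intersect is connected. -/
def ConnColl {d : ℕ} (T : Finset (Finset (Site d))) : Prop :=
  (SimpleGraph.fromRel fun A B : T => ((A : Finset (Site d)) ∩ (B : Finset (Site d))).Nonempty).Connected

/-- `Θ(S|Λ) = Σ_{ν=1}^{|S|} Σ_{connected T ⊆ S, Λ ∈ T, |T| = ν} ∏_{Λ' ∈ T} ξ(Λ')`. -/
noncomputable def Theta {d : ℕ} (ξ : Finset (Site d) → ℝ)
    (S : Finset (Finset (Site d))) (Λ : Finset (Site d)) : ℝ :=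
  ∑ ν ∈ Finset.Icc 1 S.card,
    ∑ T ∈ S.powerset.filter (fun T => Λ ∈ T ∧ T.card = ν ∧ ConnColl T),
      ∏ Λ' ∈ T, ξ Λ'

/-!
Removing `Λ` from a connected `T ∋ Λ` leaves connected components that lie in `S \ {Λ}` and
each meet `Λ`; as `T` is recovered from them, `Θ(S|Λ) ≤ ξ(Λ) ∏_C (1 + w(C)) ≤ ξ(Λ) e^{Σ_C w(C)}`,
over connected `C ⊆ S \ {Λ}` meeting `Λ`, with `w(C) = ∏_{Λ' ∈ C} ξ(Λ')`. Such a `C` has a member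
through some `x ∈ Λ`, so `Σ_C w(C) ≤ Σ_{x ∈ Λ} Σ_{Λ' ∋ x} Θ(S \ {Λ}|Λ') ≤ α|Λ|`.
-/

open Finset Relation

theorem Finset.sum_biUnion_le_sum_sum {ι κ M : Type*} [DecidableEq κ] [AddCommMonoid M]
    [Preorder M] [AddLeftMono M] {s : Finset ι} {t : ι → Finset κ} {f : κ → M} (hf : ∀ i ∈ s, ∀ k ∈ t i, 0 ≤ f k) :
    ∑ k ∈ s.biUnion t, f k ≤ ∑ i ∈ s, ∑ k ∈ t i, f k := by
  have hsnd : s.biUnion t = (s.sigma t).image Sigma.snd := by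
    ext k
    simp
  rw [hsnd]
  refine (sum_image_le_of_nonneg fun k hk => ?_).trans_eq (sum_sigma s t (f ∘ Sigma.snd))
  obtain ⟨⟨i, k⟩, hik, rfl⟩ := mem_image.1 hk
  exact hf i (mem_sigma.1 hik).1 k (mem_sigma.1 hik).2

namespace Polymer

variable {d : ℕ}

def Linked (T : Finset (Finset (Site d))) (A B : Finset (Site d)) : Prop :=
  A ∈ T ∧ B ∈ T ∧ (A ∩ B).Nonempty

instance (T : Finset (Finset (Site d))) : Std.Symm (Linked T) :=
  ⟨fun A B ⟨hA, hB, h⟩ => ⟨hB, hA, inter_comm A B ▸ h⟩⟩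

theorem connColl_iff_reflTransGen {T : Finset (Finset (Site d))} (hT : T.Nonempty) :
    ConnColl T ↔ ∀ A ∈ T, ∀ B ∈ T, ReflTransGen (Linked T) A B := by
  set G := SimpleGraph.fromRel fun A B : T => ((A : Finset (Site d)) ∩ B).Nonempty
  have linked_of_adj (u v : T) (h : G.Adj u v) : Linked T u v := by
    obtain ⟨-, h | h⟩ := h
    exacts [⟨u.2, v.2, h⟩, ⟨u.2, v.2, inter_comm (v : Finset (Site d)) u ▸ h⟩]
  have reachable_of_linked {A B} (h : ReflTransGen (Linked T) A B) (hA : A ∈ T) (hB : B ∈ T) :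
      G.Reachable ⟨A, hA⟩ ⟨B, hB⟩ := by
    induction h with
    | refl => rfl
    | @tail C B _ hCB ih =>
      refine (ih hCB.1).trans ?_
      by_cases hCB' : C = B
      · subst hCB'; rfl
      · exact SimpleGraph.Adj.reachable ⟨by simpa using hCB', Or.inl hCB.2.2⟩
  rw [ConnColl, SimpleGraph.connected_iff]
  constructor
  · rintro ⟨hG, -⟩ A hA B hB
    exact ((SimpleGraph.reachable_iff_reflTransGen _ _).1 (hG ⟨A, hA⟩ ⟨B, hB⟩)).lift _ linked_of_adj
  · exact fun h => ⟨fun u v => reachable_of_linked (h u u.2 v v.2) u.2 v.2, hT.to_subtype⟩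

noncomputable def component (T : Finset (Finset (Site d))) (A : Finset (Site d)) :
    Finset (Finset (Site d)) :=
  T.filter (ReflTransGen (Linked T) A)

section component

variable {T : Finset (Finset (Site d))} {A B : Finset (Site d)}

theorem mem_component : B ∈ component T A ↔ B ∈ T ∧ ReflTransGen (Linked T) A B :=
  mem_filter

theorem component_subset : component T A ⊆ T :=
  filter_subset _ _

theorem self_mem_component (hA : A ∈ T) : A ∈ component T A :=
  mem_component.2 ⟨hA, .refl⟩

theorem component_eq_of_mem (h : B ∈ component T A) : component T A = component T B := by
  obtain ⟨-, hAB⟩ := mem_component.1 h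
  ext C
  simp only [mem_component, and_congr_right_iff]
  exact fun _ => ⟨(symm hAB).trans, hAB.trans⟩

theorem reflTransGen_linked_component (h : ReflTransGen (Linked T) A B) :
    ReflTransGen (Linked (component T A)) A B := by
  induction h with
  | refl => exact .refl
  | @tail C B hAC hCB ih =>
    obtain ⟨hC, hB, hCB⟩ := hCB
    exact ih.tail ⟨mem_component.2 ⟨hC, hAC⟩, mem_component.2 ⟨hB, hAC.tail ⟨hC, hB, hCB⟩⟩, hCB⟩

theorem connColl_component (hA : A ∈ T) : ConnColl (component T A) := by
  rw [connColl_iff_reflTransGen ⟨A, self_mem_component hA⟩]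
  intro B₁ hB₁ B₂ hB₂
  exact (symm (reflTransGen_linked_component (mem_component.1 hB₁).2)).trans
    (reflTransGen_linked_component (mem_component.1 hB₂).2)

/-- A component of `T \ {Λ}` avoiding `Λ` would be closed under `Linked T`, so it could not
reach `Λ`. -/
theorem exists_inter_nonempty_of_mem_component {Λ : Finset (Site d)} (hT : ConnColl T)
    (hΛ : Λ ∈ T) (hA : A ∈ T.erase Λ) : ∃ B ∈ component (T.erase Λ) A, (B ∩ Λ).Nonempty := by
  by_contra! hdisj
  have closed : ∀ C, ReflTransGen (Linked T) A C → C ∈ component (T.erase Λ) A := by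
    intro C h
    induction h with
    | refl => exact self_mem_component hA
    | @tail B C _ hBC ih =>
      obtain ⟨hB, hC, hBC⟩ := hBC
      have hCΛ : C ≠ Λ := by
        rintro rfl
        exact not_nonempty_empty (hdisj B ih ▸ hBC)
      have hC' : C ∈ T.erase Λ := mem_erase.2 ⟨hCΛ, hC⟩
      exact mem_component.2 ⟨hC', (mem_component.1 ih).2.tail ⟨component_subset ih, hC', hBC⟩⟩
  have hpath := (connColl_iff_reflTransGen ⟨Λ, hΛ⟩).1 hT A (mem_of_mem_erase hA) Λ hΛ
  exact notMem_erase Λ T (component_subset (closed Λ hpath))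

end component

noncomputable def components (T : Finset (Finset (Site d))) : Finset (Finset (Finset (Site d))) :=
  T.image (component T)

theorem biUnion_components (T : Finset (Finset (Site d))) : (components T).biUnion id = T := by
  refine Subset.antisymm (fun B hB => ?_) fun A hA =>
    mem_biUnion.2 ⟨_, mem_image_of_mem _ hA, self_mem_component hA⟩
  obtain ⟨_, hC, hBC⟩ := mem_biUnion.1 hB
  obtain ⟨A, -, rfl⟩ := mem_image.1 hC
  exact component_subset hBC

theorem pairwiseDisjoint_components (T : Finset (Finset (Site d))) :
    (components T : Set (Finset (Finset (Site d)))).PairwiseDisjoint id := by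
  rintro _ hC₁ _ hC₂ hne
  obtain ⟨A₁, -, rfl⟩ := mem_image.1 (mem_coe.1 hC₁)
  obtain ⟨A₂, -, rfl⟩ := mem_image.1 (mem_coe.1 hC₂)
  exact disjoint_left.2 fun B hB₁ hB₂ =>
    hne ((component_eq_of_mem hB₁).trans (component_eq_of_mem hB₂).symm)

theorem prod_components {M : Type*} [CommMonoid M] (T : Finset (Finset (Site d)))
    (f : Finset (Site d) → M) : ∏ C ∈ components T, ∏ B ∈ C, f B = ∏ B ∈ T, f B := by
  conv_rhs => rw [← biUnion_components T]
  exact (prod_biUnion (pairwiseDisjoint_components T)).symm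

noncomputable def clustersThrough (S : Finset (Finset (Site d))) (A : Finset (Site d)) :
    Finset (Finset (Finset (Site d))) :=
  S.powerset.filter fun T => A ∈ T ∧ ConnColl T

noncomputable def clustersMeeting (S : Finset (Finset (Site d))) (Λ : Finset (Site d)) :
    Finset (Finset (Finset (Site d))) :=
  S.powerset.filter fun C => ConnColl C ∧ ∃ B ∈ C, (B ∩ Λ).Nonempty

section theta

variable {ξ : Finset (Site d) → ℝ} {S T : Finset (Finset (Site d))} {A Λ : Finset (Site d)}

theorem mem_clustersThrough : T ∈ clustersThrough S A ↔ T ⊆ S ∧ A ∈ T ∧ ConnColl T := by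
  rw [clustersThrough, mem_filter, mem_powerset]

theorem mem_clustersMeeting :
    T ∈ clustersMeeting S Λ ↔ T ⊆ S ∧ ConnColl T ∧ ∃ B ∈ T, (B ∩ Λ).Nonempty := by
  rw [clustersMeeting, mem_filter, mem_powerset]

theorem prod_nonneg_of_subset (hξ : ∀ B ∈ S, 0 ≤ ξ B) (hT : T ⊆ S) : 0 ≤ ∏ B ∈ T, ξ B :=
  prod_nonneg fun B hB => hξ B (hT hB)

theorem theta_eq_sum_clustersThrough : Theta ξ S A = ∑ T ∈ clustersThrough S A, ∏ B ∈ T, ξ B := by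
  have hcard : ∀ T ∈ clustersThrough S A, T.card ∈ Icc 1 S.card := fun T hT => by
    obtain ⟨hTS, hAT, -⟩ := mem_clustersThrough.1 hT
    exact mem_Icc.2 ⟨card_pos.2 ⟨A, hAT⟩, card_le_card hTS⟩
  rw [Theta, ← sum_fiberwise_of_maps_to hcard]
  refine sum_congr rfl fun ν _ => sum_congr ?_ fun _ _ => rfl
  rw [clustersThrough, filter_filter]
  exact filter_congr fun T _ => by tauto

theorem theta_eq_mul_sum_erase :
    Theta ξ S Λ = ξ Λ * ∑ T ∈ clustersThrough S Λ, ∏ B ∈ T.erase Λ, ξ B := by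
  rw [theta_eq_sum_clustersThrough, mul_sum]
  exact sum_congr rfl fun T hT =>
    (mul_prod_erase _ _ (mem_clustersThrough.1 hT).2.1).symm

theorem sum_clustersThrough_erase_le_sum_powerset (hξ : ∀ B ∈ S, 0 ≤ ξ B) :
    ∑ T ∈ clustersThrough S Λ, ∏ B ∈ T.erase Λ, ξ B ≤
      ∑ 𝒞 ∈ (clustersMeeting (S.erase Λ) Λ).powerset, ∏ C ∈ 𝒞, ∏ B ∈ C, ξ B := by
  set F := fun T : Finset (Finset (Site d)) => components (T.erase Λ)
  have hF_mem : ∀ T ∈ clustersThrough S Λ, F T ∈ (clustersMeeting (S.erase Λ) Λ).powerset := by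
    intro T hT
    obtain ⟨hTS, hΛT, hT⟩ := mem_clustersThrough.1 hT
    refine mem_powerset.2 fun C hC => ?_
    obtain ⟨A, hA, rfl⟩ := mem_image.1 hC
    exact mem_clustersMeeting.2 ⟨component_subset.trans (erase_subset_erase _ hTS),
      connColl_component hA, exists_inter_nonempty_of_mem_component hT hΛT hA⟩
  have hF_inj : Set.InjOn F (clustersThrough S Λ) := by
    intro T₁ hT₁ T₂ hT₂ h
    have herase : T₁.erase Λ = T₂.erase Λ := by
      rw [← biUnion_components (T₁.erase Λ), ← biUnion_components (T₂.erase Λ)]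
      exact congrArg (·.biUnion id) h
    rw [← insert_erase (mem_clustersThrough.1 hT₁).2.1,
      ← insert_erase (mem_clustersThrough.1 hT₂).2.1, herase]
  calc ∑ T ∈ clustersThrough S Λ, ∏ B ∈ T.erase Λ, ξ B
      = ∑ 𝒞 ∈ (clustersThrough S Λ).image F, ∏ C ∈ 𝒞, ∏ B ∈ C, ξ B := by
        rw [sum_image hF_inj]
        exact sum_congr rfl fun T _ => (prod_components _ ξ).symm
    _ ≤ _ := by
        refine sum_le_sum_of_subset_of_nonneg (image_subset_iff.2 hF_mem) fun 𝒞 h𝒞 _ => ?_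
        refine prod_nonneg fun C hC => prod_nonneg_of_subset hξ ?_
        exact (mem_clustersMeeting.1 (mem_powerset.1 h𝒞 hC)).1.trans (erase_subset Λ S)

theorem clustersMeeting_subset_biUnion :
    clustersMeeting S Λ ⊆
      Λ.biUnion fun x => (S.filter (x ∈ ·)).biUnion fun A => clustersThrough S A := by
  intro C hC
  obtain ⟨hCS, hC, B, hBC, x, hx⟩ := mem_clustersMeeting.1 hC
  simp only [mem_biUnion, mem_filter]
  exact ⟨x, (mem_inter.1 hx).2, B, ⟨hCS hBC, (mem_inter.1 hx).1⟩,
    mem_clustersThrough.2 ⟨hCS, hBC, hC⟩⟩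

theorem sum_clustersMeeting_le (hξ : ∀ B ∈ S, 0 ≤ ξ B) :
    ∑ C ∈ clustersMeeting S Λ, ∏ B ∈ C, ξ B ≤
      ∑ x ∈ Λ, ∑ A ∈ S.filter (x ∈ ·), Theta ξ S A := by
  have hw : ∀ A, ∀ T ∈ clustersThrough S A, 0 ≤ ∏ B ∈ T, ξ B := fun A T hT =>
    prod_nonneg_of_subset hξ (mem_clustersThrough.1 hT).1
  calc ∑ C ∈ clustersMeeting S Λ, ∏ B ∈ C, ξ B
      ≤ ∑ T ∈ Λ.biUnion fun x => (S.filter (x ∈ ·)).biUnion fun A => clustersThrough S A,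
          ∏ B ∈ T, ξ B := by
        refine sum_le_sum_of_subset_of_nonneg clustersMeeting_subset_biUnion fun T hT _ => ?_
        obtain ⟨-, -, A, -, hTA⟩ := by simpa only [mem_biUnion] using hT
        exact hw A T hTA
    _ ≤ ∑ x ∈ Λ, ∑ T ∈ (S.filter (x ∈ ·)).biUnion fun A => clustersThrough S A,
          ∏ B ∈ T, ξ B :=
        sum_biUnion_le_sum_sum fun x _ T hT => by
          obtain ⟨A, -, hTA⟩ := mem_biUnion.1 hT
          exact hw A T hTA
    _ ≤ ∑ x ∈ Λ, ∑ A ∈ S.filter (x ∈ ·), Theta ξ S A := by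
        simp only [theta_eq_sum_clustersThrough]
        exact sum_le_sum fun x _ => sum_biUnion_le_sum_sum fun A _ => hw A

theorem theta_le_mul_exp {α : ℝ} (hΛ : Λ ∈ S) (hξ : ∀ B ∈ S, 0 ≤ ξ B)
    (hα : ∀ x ∈ Λ, ∑ A ∈ (S.erase Λ).filter (x ∈ ·), Theta ξ (S.erase Λ) A ≤ α) :
    Theta ξ S Λ ≤ ξ Λ * Real.exp (α * Λ.card) := by
  have hξ' : ∀ B ∈ S.erase Λ, 0 ≤ ξ B := fun B hB => hξ B (mem_of_mem_erase hB)
  have hw : ∀ C ∈ clustersMeeting (S.erase Λ) Λ, 0 ≤ ∏ B ∈ C, ξ B := fun C hC =>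
    prod_nonneg_of_subset hξ' (mem_clustersMeeting.1 hC).1
  rw [theta_eq_mul_sum_erase]
  refine mul_le_mul_of_nonneg_left ?_ (hξ Λ hΛ)
  calc ∑ T ∈ clustersThrough S Λ, ∏ B ∈ T.erase Λ, ξ B
      ≤ ∑ 𝒞 ∈ (clustersMeeting (S.erase Λ) Λ).powerset, ∏ C ∈ 𝒞, ∏ B ∈ C, ξ B :=
        sum_clustersThrough_erase_le_sum_powerset hξ
    _ = ∏ C ∈ clustersMeeting (S.erase Λ) Λ, (1 + ∏ B ∈ C, ξ B) := (prod_one_add _).symm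
    _ ≤ ∏ C ∈ clustersMeeting (S.erase Λ) Λ, Real.exp (∏ B ∈ C, ξ B) :=
        prod_le_prod (fun C hC => by linarith [hw C hC])
          fun C _ => by linarith [Real.add_one_le_exp (∏ B ∈ C, ξ B)]
    _ = Real.exp (∑ C ∈ clustersMeeting (S.erase Λ) Λ, ∏ B ∈ C, ξ B) := (Real.exp_sum _ _).symm
    _ ≤ Real.exp (∑ x ∈ Λ, ∑ A ∈ (S.erase Λ).filter (x ∈ ·), Theta ξ (S.erase Λ) A) :=
        Real.exp_le_exp.2 (sum_clustersMeeting_le hξ')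
    _ ≤ Real.exp (α * Λ.card) := by
        rw [Real.exp_le_exp, mul_comm, ← nsmul_eq_mul]
        exact sum_le_card_nsmul _ _ _ hα

end theta

end Polymer

theorem theta_sum_induction_step_general
    (d : ℕ) (ξ : Finset (Site d) → ℝ)
    (hξ : ∀ Λ : Finset (Site d), Λ.Nonempty → 0 ≤ ξ Λ)
    (α : ℝ) (hα : 0 < α) (N : ℕ)
    (hind : ∀ S' : Finset (Finset (Site d)), (∀ Λ ∈ S', Finset.Nonempty Λ) →
      S'.card = N → ∀ x : Site d, x ∈ S'.biUnion id →
        ∑ Λ ∈ S'.filter (fun Λ => x ∈ Λ), Theta ξ S' Λ ≤ α) :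
    ∀ S : Finset (Finset (Site d)), (∀ Λ ∈ S, Finset.Nonempty Λ) →
      S.card = N + 1 → ∀ x : Site d, x ∈ S.biUnion id →
        ∑ Λ ∈ S.filter (fun Λ => x ∈ Λ), Theta ξ S Λ ≤
          ∑ Λ ∈ S.filter (fun Λ => x ∈ Λ), ξ Λ * Real.exp (α * (Λ.card : ℝ)) := by
  intro S hS hcard x _
  refine sum_le_sum fun Λ hΛ => ?_
  have hΛS := (mem_filter.1 hΛ).1
  have hS' : ∀ A ∈ S.erase Λ, A.Nonempty := fun A hA => hS A (mem_of_mem_erase hA)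
  have hcard' : (S.erase Λ).card = N := by rw [card_erase_of_mem hΛS, hcard, Nat.add_sub_cancel]
  refine Polymer.theta_le_mul_exp hΛS (fun A hA => hξ A (hS A hA)) fun y _ => ?_
  by_cases hy : y ∈ (S.erase Λ).biUnion id
  · exact hind _ hS' hcard' y hy
  · have hempty : (S.erase Λ).filter (y ∈ ·) = ∅ :=
      filter_eq_empty_iff.2 fun A hA hyA => hy (mem_biUnion.2 ⟨A, hA, hyA⟩)
    rw [hempty, sum_empty]
    exact hα.le

/-- Induction step for the Kotecky–Preiss style bound: if the bound
`Σ_{Λ ∈ S', Λ ∋ x} Θ(S'|Λ) ≤ α` holds for all collections `S'` of cardinality `N`, then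
for collections `S` of cardinality `N + 1` one has
`Σ_{Λ ∈ S, Λ ∋ x} Θ(S|Λ) ≤ Σ_{Λ ∈ S, Λ ∋ x} ξ(Λ) e^{α|Λ|}`. -/
theorem theta_sum_induction_step
    (d : ℕ) (hd : 1 ≤ d) (ξ : Finset (Site d) → ℝ)
    (hξ : ∀ Λ : Finset (Site d), Λ.Nonempty → 0 ≤ ξ Λ)
    (α : ℝ) (hα : 0 < α) (N : ℕ) (hN : 1 ≤ N)
    (hind : ∀ S' : Finset (Finset (Site d)), (∀ Λ ∈ S', Finset.Nonempty Λ) →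
      S'.card = N → ∀ x : Site d, x ∈ S'.biUnion id →
        ∑ Λ ∈ S'.filter (fun Λ => x ∈ Λ), Theta ξ S' Λ ≤ α) :
    ∀ S : Finset (Finset (Site d)), (∀ Λ ∈ S, Finset.Nonempty Λ) →
      S.card = N + 1 → ∀ x : Site d, x ∈ S.biUnion id →
        ∑ Λ ∈ S.filter (fun Λ => x ∈ Λ), Theta ξ S Λ ≤
          ∑ Λ ∈ S.filter (fun Λ => x ∈ Λ), ξ Λ * Real.exp (α * (Λ.card : ℝ)) :=
  theta_sum_induction_step_general d ξ hξ α hα N hind
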